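/- arXiv:2210.13262 — 2 statements merged into one kernel-verified Lean document; each statement's English description precedes it below -/
import Mathlib

section
/- Let G be a simple graph on a finite vertex type V with finitely many edges, and let Δ be its symmetric digraph with arc type A = {(u,v) : G.Adj u v}, 𝔱(u,v) = u, 𝔥(u,v) = v, inv (u,v) = some (v,u). Let M^I be the A×A matrix over ℚ with M^I(a,a') = δ_{𝔥a,𝔱a'} − δ_{a⁻¹,a'}. Then in ℚ[[t]]: (1 − t²)^{|V|} · det(1 − t·M^I) = (1 − t²)^{|E|} · det(1 − t·A_G + t²·(D_G − 1)), where |E| is the number of edges of G, A_G is the adjacency matrix of G, D_G is the degree matrix of G, and 1 denotes the V×V identity matrix (the Bass–Ihara theorem for simple graphs). -/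
/-!
Let `S` and `T` be the `V × A` tail and head incidence matrices of the symmetric digraph, `J` the
permutation matrix of arc reversal. Then `Mᴵ = Tᵀ S - J`, `A_G = S Tᵀ`, `D_G = T Tᵀ`, `S J = T` and
`J² = 1`, so `(1 - tJ)(1 - tMᴵ) = (1 - t²) - t (1 - tJ) Tᵀ S`. Sylvester's identity
`u^|V| det (u - X Y) = u^|A| det (u - Y X)` with `u = 1 - t²` moves this to the vertex side, where
`S (1 - tJ) Tᵀ = A_G - t D_G` yields `det (1 - t A_G + t² (D_G - 1))`. Since `J` is a fixed-point-free
involution, pairing each arc with its reverse puts `1 - tJ` in block form `[[1, -t], [-t, 1]]`, so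
`det (1 - tJ) = (1 - t²)^|E|`; cancelling it (with `|A| = 2|E|`) gives the theorem.
-/

open PowerSeries Matrix Finset

noncomputable section

variable {V A R : Type*}

/-- Exponential of a formal power series over a ℚ-algebra (intended for series with zero
constant term): `exp f = ∑ₖ f^k / k!`; the coefficient of degree `n` only receives
contributions from `k ≤ n` when the constant term of `f` vanishes. -/
def pexp [CommRing R] [Algebra ℚ R] (f : PowerSeries R) : PowerSeries R :=
  PowerSeries.mk fun n => ∑ k ∈ Finset.range (n + 1),
    ((Nat.factorial k : ℚ))⁻¹ • (PowerSeries.coeff n (f ^ k))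

/-- The generalized weight matrix `M(a,a') = τ(a')·δ_{𝔥a,𝔱a'} − υ(a')·δ_{a⁻¹,a'}`. -/
def genWeight [CommRing R] [DecidableEq V] [DecidableEq A]
    (tl hd : A → V) (inv : A → Option A) (τ υ : A → R) : Matrix A A R :=
  fun a a' => τ a' * (if hd a = tl a' then 1 else 0) -
    (if inv a = some a' then υ a' else 0)

/-- The matrix `J(a,a') = υ(a')·δ_{a⁻¹,a'}`. -/
def invJ [CommRing R] [DecidableEq A] (inv : A → Option A) (υ : A → R) :
    Matrix A A R :=
  fun a a' => if inv a = some a' then υ a' else 0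

/-- `c_a(t)`: `1 + υ(a)t` for loops, `1 − υ(a)υ(a⁻¹)t²` for non-loop arcs with inverse,
`1` for arcs with no inverse. -/
def cFac [CommRing R] [DecidableEq V] (tl hd : A → V) (inv : A → Option A)
    (υ : A → R) (a : A) : PowerSeries R :=
  if tl a = hd a then 1 + PowerSeries.C (υ a) * X
  else
    match inv a with
    | some b => 1 - PowerSeries.C (υ a * υ b) * X ^ 2
    | none => 1

/-- The weighted adjacency matrix `A_Δ`. -/
def adjMat [CommRing R] [Fintype A] [DecidableEq V] (tl hd : A → V)
    (inv : A → Option A) (τ υ : A → R) : Matrix V V (PowerSeries R) :=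
  fun u v => ∑ a : A, if tl a = u ∧ hd a = v then
    PowerSeries.C (τ a) * Ring.inverse (cFac tl hd inv υ a) else 0

/-- The weighted backtrack matrix `B_Δ`. -/
def backMat [CommRing R] [Fintype A] [DecidableEq V] (tl hd : A → V)
    (inv : A → Option A) (τ υ : A → R) : Matrix V V (PowerSeries R) :=
  fun u v => if u = v then
    ∑ a : A, (if tl a = u ∧ tl a ≠ hd a then
      (match inv a with
       | some b => PowerSeries.C (τ a * υ b) * Ring.inverse (cFac tl hd inv υ a)
       | none => 0)
      else 0)
  else 0

/-- The sum `N_m` of the circular products over all closed paths of length `m`. -/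
def circSum [CommRing R] [Fintype A] [DecidableEq A] [DecidableEq V]
    (tl hd : A → V) (M : Matrix A A R) (m : ℕ) [NeZero m] : R :=
  ∑ f ∈ Finset.univ.filter (fun f : ZMod m → A => ∀ i, hd (f i) = tl (f (i + 1))),
    ∏ i, M (f i) (f (i + 1))

/-- `N_m` as a function of `m : ℕ` (junk value `0` at `m = 0`). -/
def Nfun [CommRing R] [Fintype A] [DecidableEq A] [DecidableEq V]
    (tl hd : A → V) (M : Matrix A A R) (m : ℕ) : R :=
  if h : m = 0 then 0 else
    haveI : NeZero m := ⟨h⟩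
    circSum tl hd M m

/-- The generalized weighted zeta function `exp (∑_{m ≥ 1} (N_m / m) t^m)`. -/
def zetaFun [CommRing R] [Algebra ℚ R] (N : ℕ → R) : PowerSeries R :=
  pexp (PowerSeries.mk fun m => if m = 0 then 0 else ((m : ℚ)⁻¹) • N m)

universe u

theorem Function.Involutive.exists_sum_equiv {ι : Type u} [Fintype ι] {σ : ι → ι}
    (hσ : Function.Involutive σ) (hfix : ∀ a, σ a ≠ a) :
    ∃ (κ : Type u) (_ : Fintype κ) (e : κ ⊕ κ ≃ ι), ∀ i, σ (e i) = e i.swap := by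
  let _ : LinearOrder ι := LinearOrder.lift' _ (Fintype.equivFin ι).injective
  let e : {a // a < σ a} ⊕ {a // a < σ a} → ι := Sum.elim Subtype.val (σ ∘ Subtype.val)
  have he : Function.Bijective e := by
    refine ⟨?_, fun a => ?_⟩
    · rintro (⟨a, ha⟩ | ⟨a, ha⟩) (⟨b, hb⟩ | ⟨b, hb⟩) h <;>
        simp only [e, Sum.elim_inl, Sum.elim_inr, Function.comp_apply] at h
      · exact congrArg _ (Subtype.ext h)
      · subst h; rw [hσ] at ha; exact absurd (ha.trans hb) (lt_irrefl _)
      · subst h; rw [hσ] at hb; exact absurd (ha.trans hb) (lt_irrefl _)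
      · exact congrArg _ (Subtype.ext (hσ.injective h))
    · rcases (hfix a).symm.lt_or_gt with h | h
      · exact ⟨.inl ⟨a, h⟩, rfl⟩
      · exact ⟨.inr ⟨σ a, by rwa [hσ]⟩, hσ a⟩
  refine ⟨_, inferInstance, Equiv.ofBijective e he, ?_⟩
  rintro (k | k)
  · rfl
  · exact hσ _

namespace Matrix

variable {ι n : Type*}

theorem permMatrix_mul_self_of_involutive [Fintype ι] [DecidableEq ι] [Semiring R]
    {σ : Equiv.Perm ι} (hσ : Function.Involutive σ) : σ.permMatrix R * σ.permMatrix R = 1 := by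
  rw [← permMatrix_mul, show σ * σ = 1 from Equiv.ext hσ, permMatrix_one]

section Determinants

variable [Fintype ι] [Fintype n] [DecidableEq ι] [DecidableEq n] [CommRing R]

theorem det_scalar_sub_mul_comm (M : Matrix ι n R) (N : Matrix n ι R) (t : R) :
    t ^ Fintype.card n * det (scalar ι t - M * N) =
      t ^ Fintype.card ι * det (scalar n t - N * M) := by
  simpa [eval_charpoly] using congrArg (Polynomial.eval t) (charpoly_mul_comm' M N)

theorem det_one_sub_smul_transpose_mul_sub {S T : Matrix n ι R} {J : Matrix ι ι R}
    (hJ : J * J = 1) (hSJ : S * J = T) (c : R) :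
    (1 - c ^ 2) ^ Fintype.card n * (det (1 - c • J) * det (1 - c • (Tᵀ * S - J))) =
      (1 - c ^ 2) ^ Fintype.card ι * det (1 - c • (S * Tᵀ) + c ^ 2 • (T * Tᵀ - 1)) := by
  have hfactor : (1 - c • J) * (1 - c • (Tᵀ * S - J)) =
      scalar ι (1 - c ^ 2) - (c • (1 - c • J) * Tᵀ) * S := by
    simp only [scalar_apply, ← smul_one_eq_diagonal, Matrix.sub_mul, Matrix.mul_sub,
      Matrix.smul_mul, Matrix.mul_smul, Matrix.mul_one, Matrix.one_mul, smul_smul, hJ,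
      Matrix.mul_assoc, smul_sub]
    module
  have hswap : S * (c • (1 - c • J) * Tᵀ) = c • (S * Tᵀ) - c ^ 2 • (T * Tᵀ) := by
    simp only [Matrix.mul_smul, Matrix.smul_mul, Matrix.mul_sub, Matrix.sub_mul, Matrix.mul_one,
      ← Matrix.mul_assoc, hSJ, smul_sub, smul_smul]
    module
  rw [← det_mul, hfactor, det_scalar_sub_mul_comm, hswap, scalar_apply, ← smul_one_eq_diagonal]
  congr 2
  module

theorem det_one_sub_smul_permMatrix_of_involutive {σ : Equiv.Perm ι}
    (hσ : Function.Involutive σ) (hfix : ∀ a, σ a ≠ a) (c : R) :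
    det (1 - c • σ.permMatrix R) = (1 - c ^ 2) ^ (Fintype.card ι / 2) := by
  obtain ⟨κ, _, e, he⟩ := hσ.exists_sum_equiv hfix
  classical
  have hcard : Fintype.card ι = 2 * Fintype.card κ := by
    rw [← Fintype.card_congr e, Fintype.card_sum]; ring
  have hblocks : (1 - c • σ.permMatrix R).submatrix e e = fromBlocks 1 (-c • 1) (-c • 1) 1 := by
    ext (i | i) (j | j) <;>
      simp [PEquiv.toMatrix_apply, one_apply, he, e.injective.eq_iff, eq_comm]
  rw [← det_submatrix_equiv_self e, hblocks, det_fromBlocks_one₁₁, hcard,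
    Nat.mul_div_cancel_left _ two_pos, smul_mul_smul_comm, Matrix.one_mul, neg_mul_neg, ← sq,
    show (1 : Matrix κ κ R) - c ^ 2 • 1 = (1 - c ^ 2) • 1 by rw [sub_smul, one_smul],
    det_smul, det_one, mul_one]

end Determinants

variable [DecidableEq n]

variable (R) in
def incidence [Zero R] [One R] (f : ι → n) : Matrix n ι R :=
  of fun v a => if f a = v then 1 else 0

variable [Semiring R]

theorem incidence_mul_transpose_incidence [Fintype ι] (f g : ι → n) :
    incidence R f * (incidence R g)ᵀ = of fun u v => (#{a | f a = u ∧ g a = v} : R) := by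
  ext u v
  simp [incidence, mul_apply, ← ite_and, Finset.sum_boole, and_comm]

theorem incidence_mul_transpose_incidence_self [Fintype ι] (f : ι → n) :
    incidence R f * (incidence R f)ᵀ = diagonal fun v => (#{a | f a = v} : R) := by
  rw [incidence_mul_transpose_incidence]
  ext u v
  by_cases h : u = v
  · simp [h]
  · have : ∀ a, ¬(f a = u ∧ f a = v) := fun a ⟨hu, hv⟩ => h (hu.symm.trans hv)
    simp [h, this]

theorem transpose_incidence_mul_incidence [Fintype n] (f g : ι → n) :
    (incidence R f)ᵀ * incidence R g = of fun a b => if f a = g b then 1 else 0 := by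
  ext a b
  simp [incidence, mul_apply, eq_comm]

theorem incidence_mul_permMatrix [Fintype ι] [DecidableEq ι] (f : ι → n) (σ : Equiv.Perm ι) :
    incidence R f * σ.permMatrix R = incidence R (f ∘ σ.symm) := by
  ext v b
  simp [incidence, mul_apply, PEquiv.toMatrix_apply, ← Equiv.eq_symm_apply]

end Matrix

theorem genWeight_map [CommRing R] {S : Type*} [CommRing S] [DecidableEq V] [DecidableEq A]
    (f : R →+* S) (tl hd : A → V) (inv : A → Option A) (τ υ : A → R) :
    (genWeight tl hd inv τ υ).map f = genWeight tl hd inv (f ∘ τ) (f ∘ υ) := by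
  ext a b
  simp [genWeight, apply_ite f]

theorem genWeight_eq_transpose_incidence_mul_sub [CommRing R] [Fintype V] [Fintype A]
    [DecidableEq V] [DecidableEq A]
    (tl hd : A → V) {inv : A → Option A} (σ : Equiv.Perm A) (hinv : ∀ a, inv a = some (σ a)) :
    genWeight tl hd inv (fun _ => (1 : R)) (fun _ => 1) =
      (incidence R hd)ᵀ * incidence R tl - σ.permMatrix R := by
  rw [transpose_incidence_mul_incidence]
  ext a b
  simp [genWeight, PEquiv.toMatrix_apply, hinv]

namespace SimpleGraph

variable (G : SimpleGraph V)

abbrev Arc := {p : V × V // G.Adj p.1 p.2}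

def Arc.rev : Equiv.Perm G.Arc :=
  Function.Involutive.toPerm (fun a => ⟨a.1.swap, a.2.symm⟩) fun _ => rfl

theorem Arc.rev_involutive : Function.Involutive (Arc.rev G) := fun _ => rfl

theorem Arc.rev_ne (a : G.Arc) : Arc.rev G a ≠ a := fun h =>
  G.ne_of_adj a.2 (congrArg (·.1.1) h).symm

def arcEquivDart : G.Arc ≃ G.Dart where
  toFun a := ⟨a.1, a.2⟩
  invFun d := ⟨d.toProd, d.adj⟩

variable [DecidableRel G.Adj]

theorem adjMatrix_map [DecidableEq V] {S : Type*} [Semiring R] [Semiring S] (f : R →+* S) :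
    (G.adjMatrix R).map f = G.adjMatrix S := by
  ext u v
  simp [adjMatrix_apply, apply_ite f]

variable [Fintype V]

theorem card_arc : Fintype.card G.Arc = 2 * #G.edgeFinset := by
  rw [Fintype.card_congr (arcEquivDart G), dart_card_eq_twice_card_edges]

variable [DecidableEq V]

theorem card_arc_head (v : V) : #{a : G.Arc | a.1.2 = v} = G.degree v := by
  rw [← card_neighborFinset_eq_degree]
  refine card_bij (fun a _ => a.1.1) (fun a ha => ?_) (fun a ha b hb h => ?_) (fun w hw => ?_)
  · rw [mem_filter] at ha
    rw [mem_neighborFinset, ← ha.2]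
    exact a.2.symm
  · rw [mem_filter] at ha hb
    exact Subtype.ext (Prod.ext h (ha.2.trans hb.2.symm))
  · exact ⟨⟨(w, v), (mem_neighborFinset ..).1 hw |>.symm⟩, by simp, rfl⟩

theorem card_arc_tail_head (u v : V) :
    #{a : G.Arc | a.1.1 = u ∧ a.1.2 = v} = if G.Adj u v then 1 else 0 := by
  split_ifs with h
  · rw [card_eq_one]
    refine ⟨⟨(u, v), h⟩, ?_⟩
    ext a
    simp [Subtype.ext_iff, Prod.ext_iff]
  · rw [card_eq_zero, filter_eq_empty_iff]
    rintro ⟨⟨u, v⟩, huv⟩ - ⟨rfl, rfl⟩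
    exact h huv

variable (R) [Semiring R]

theorem adjMatrix_eq_incidence_mul :
    G.adjMatrix R =
      incidence R (fun a : G.Arc => a.1.1) * (incidence R fun a : G.Arc => a.1.2)ᵀ := by
  rw [incidence_mul_transpose_incidence]
  ext u v
  simp [card_arc_tail_head, adjMatrix_apply]

theorem diagonal_degree_eq_incidence_mul :
    diagonal (fun v => (G.degree v : R)) =
      incidence R (fun a : G.Arc => a.1.2) * (incidence R fun a : G.Arc => a.1.2)ᵀ := by
  rw [incidence_mul_transpose_incidence_self]
  simp [card_arc_head]

theorem incidence_tail_mul_permMatrix_rev :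
    incidence R (fun a : G.Arc => a.1.1) * (Arc.rev G).permMatrix R =
      incidence R fun a : G.Arc => a.1.2 := by
  rw [incidence_mul_permMatrix]
  rfl

end SimpleGraph

/-- Bass–Ihara theorem for simple graphs:
`(1 − t²)^{|V|} · det(1 − t·Mᴵ) = (1 − t²)^{|E|} · det(1 − t·A_G + t²·(D_G − 1))`. -/
theorem bass_ihara
    [Fintype V] [DecidableEq V] (G : SimpleGraph V) [DecidableRel G.Adj] :
    ((1 : PowerSeries ℚ) - PowerSeries.X ^ 2) ^ (Fintype.card V) *
      Matrix.det (1 - (PowerSeries.X : PowerSeries ℚ) •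
        (genWeight (fun a : {p : V × V // G.Adj p.1 p.2} => a.1.1) (fun a => a.1.2)
          (fun a => some ⟨(a.1.2, a.1.1), G.adj_symm a.2⟩)
          (fun _ => (1 : ℚ)) (fun _ => 1)).map (PowerSeries.C (R := ℚ))) =
    ((1 : PowerSeries ℚ) - PowerSeries.X ^ 2) ^ (G.edgeFinset.card) *
      Matrix.det (1 - (PowerSeries.X : PowerSeries ℚ) •
          (G.adjMatrix ℚ).map (PowerSeries.C (R := ℚ))
        + ((PowerSeries.X : PowerSeries ℚ)) ^ 2 •
          ((Matrix.diagonal fun u => (G.degree u : ℚ)) - 1).map (PowerSeries.C (R := ℚ))) := by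
  have hu : (1 - X ^ 2 : PowerSeries ℚ) ≠ 0 := fun h => by simpa using congrArg constantCoeff h
  have hcore := det_one_sub_smul_transpose_mul_sub
    (permMatrix_mul_self_of_involutive (SimpleGraph.Arc.rev_involutive G))
    (SimpleGraph.incidence_tail_mul_permMatrix_rev _ G) (X : PowerSeries ℚ)
  rw [det_one_sub_smul_permMatrix_of_involutive (SimpleGraph.Arc.rev_involutive G)
    (SimpleGraph.Arc.rev_ne G), SimpleGraph.card_arc, Nat.mul_div_cancel_left _ two_pos,
    ← SimpleGraph.adjMatrix_eq_incidence_mul, ← SimpleGraph.diagonal_degree_eq_incidence_mul]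
    at hcore
  have hD : ((diagonal fun v => (G.degree v : ℚ)) - 1).map C =
      diagonal (fun v => (G.degree v : PowerSeries ℚ)) - 1 := by
    ext u v
    by_cases h : u = v <;> simp [h, one_apply]
  simp only [genWeight_map, Function.comp_def, map_one, SimpleGraph.adjMatrix_map, hD]
  rw [genWeight_eq_transpose_incidence_mul_sub _ _ (SimpleGraph.Arc.rev G)]
  · apply mul_left_cancel₀ (pow_ne_zero G.edgeFinset.card hu)
    linear_combination hcore
  · -- the reversal written out in the statement is `Arc.rev G` unfolded
    exact fun _ => rfl
end
end

section
/- Let V, A, 𝔱, 𝔥, inv be a finite digraph with inverse assignment, and take τ = υ = 1 (constant functions to 1 ∈ ℚ), so that M^I(a,a') = δ_{𝔥a,𝔱a'} − δ_{a⁻¹,a'}. Then for every m ≥ 1, the sum N_m over all closed paths f of length m of the circular product Π_{i ∈ ZMod m} M^I(f i, f (i+1)) equals the number of reduced closed paths of length m, i.e. the number of functions f : ZMod m → A such that 𝔥(f i) = 𝔱(f (i+1)) and inv(f i) ≠ some (f (i+1)) for all i ∈ ZMod m. -/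
open PowerSeries Matrix Finset

noncomputable section

variable {V A R : Type*}

/-! Along a closed path the delta `δ_{𝔥a,𝔱a'}` of `M^I` is always `1`, so each factor of the
circular product is `1 − [inv a = some a']` ∈ {0, 1}, and the product is the indicator of
reducedness. -/

section IharaWeights

variable [CommRing R] [DecidableEq V] [DecidableEq A] (tl hd : A → V) (inv : A → Option A)

theorem genWeight_one_one_apply_of_hd_eq_tl {a a' : A} (h : hd a = tl a') :
    genWeight tl hd inv (fun _ => (1 : R)) (fun _ => 1) a a' =
      if inv a ≠ some a' then 1 else 0 := by
  by_cases hinv : inv a = some a' <;> simp [genWeight, h, hinv]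

theorem prod_genWeight_one_one_of_closed {m : ℕ} [NeZero m] {f : ZMod m → A}
    (hf : ∀ i, hd (f i) = tl (f (i + 1))) :
    ∏ i, genWeight tl hd inv (fun _ => (1 : R)) (fun _ => 1) (f i) (f (i + 1)) =
      if ∀ i, inv (f i) ≠ some (f (i + 1)) then 1 else 0 := by
  rw [Finset.prod_congr rfl fun i _ => genWeight_one_one_apply_of_hd_eq_tl tl hd inv (hf i),
    Finset.prod_boole]
  simp only [Finset.mem_univ, true_implies]

theorem circSum_genWeight_one_one [Fintype A] (m : ℕ) [NeZero m] :
    circSum tl hd (genWeight tl hd inv (fun _ => (1 : R)) (fun _ => 1)) m =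
      ((Finset.univ.filter (fun f : ZMod m → A =>
        ∀ i, hd (f i) = tl (f (i + 1)) ∧ inv (f i) ≠ some (f (i + 1)))).card : R) := by
  rw [circSum, Finset.sum_congr rfl fun f hf =>
      prod_genWeight_one_one_of_closed tl hd inv (Finset.mem_filter.1 hf).2,
    Finset.sum_boole, Finset.filter_filter]
  simp only [forall_and]

end IharaWeights

theorem circSum_ihara_eq_card_reduced_general
    [Fintype A] [DecidableEq V] [DecidableEq A]
    (tl hd : A → V) (inv : A → Option A)
    (m : ℕ) [NeZero m] :
    circSum tl hd (genWeight tl hd inv (fun _ => (1 : ℚ)) (fun _ => 1)) m =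
      ((Finset.univ.filter (fun f : ZMod m → A =>
        ∀ i, hd (f i) = tl (f (i + 1)) ∧ inv (f i) ≠ some (f (i + 1)))).card : ℚ) :=
  circSum_genWeight_one_one tl hd inv m

/-- for the Ihara weights `τ = υ = 1`, `N_m` counts the reduced closed
paths of length `m`. -/
theorem circSum_ihara_eq_card_reduced
    [Fintype V] [Fintype A] [DecidableEq V] [DecidableEq A]
    (tl hd : A → V) (inv : A → Option A)
    (hsym : ∀ a b, inv a = some b → inv b = some a ∧ tl b = hd a ∧ hd b = tl a)
    (hloop : ∀ a, tl a = hd a → inv a = some a)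
    (hnonloop : ∀ a b, tl a ≠ hd a → inv a = some b → b ≠ a)
    (m : ℕ) [NeZero m] :
    circSum tl hd (genWeight tl hd inv (fun _ => (1 : ℚ)) (fun _ => 1)) m =
      ((Finset.univ.filter (fun f : ZMod m → A =>
        ∀ i, hd (f i) = tl (f (i + 1)) ∧ inv (f i) ≠ some (f (i + 1)))).card : ℚ) :=
  circSum_ihara_eq_card_reduced_general tl hd inv m
end
end
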